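/- The space 𝓗′ of triples of projective lines in ℝP² with pairwise distinct intersection points is homotopy equivalent to the complete flag variety Flag(ℝ³), the subspace of Gr(1,ℝ³) × Gr(2,ℝ³) consisting of pairs (V₁,V₂) with V₁ ⊂ V₂. -/

import Mathlib

open Module Matrix CategoryTheory

noncomputable section

/-- `ℝ^m` with its Euclidean topology and inner product. -/
abbrev Euc (m : ℕ) : Type := EuclideanSpace ℝ (Fin m)

/-- The Grassmannian `Gr(k, ℝ^m)` of `k`-dimensional linear subspaces of `ℝ^m`. -/
def Gr (k m : ℕ) : Type :=
  { V : Submodule ℝ (Euc m) // finrank ℝ V = k }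

/-- The standard topology on the Grassmannian, induced by sending a subspace to the
orthogonal projection onto it. -/
noncomputable instance (k m : ℕ) : TopologicalSpace (Gr k m) :=
  TopologicalSpace.induced
    (fun V : Gr k m =>
      (V.1.subtypeL.comp (Submodule.orthogonalProjectionOnto V.1) : Euc m →L[ℝ] Euc m))
    inferInstance

/-- The condition that a triple of projective lines (i.e. 2-dimensional subspaces) has
pairwise distinct intersection points: each pairwise intersection is 1-dimensional, and
the three intersections are pairwise distinct. -/
def GoodTriple {m : ℕ} (p : Gr 2 m × Gr 2 m × Gr 2 m) : Prop :=
  finrank ℝ ↥(p.1.1 ⊓ p.2.1.1) = 1 ∧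
  finrank ℝ ↥(p.1.1 ⊓ p.2.2.1) = 1 ∧
  finrank ℝ ↥(p.2.1.1 ⊓ p.2.2.1) = 1 ∧
  p.1.1 ⊓ p.2.1.1 ≠ p.1.1 ⊓ p.2.2.1 ∧
  p.1.1 ⊓ p.2.1.1 ≠ p.2.1.1 ⊓ p.2.2.1 ∧
  p.1.1 ⊓ p.2.2.1 ≠ p.2.1.1 ⊓ p.2.2.1

/-- The space of triples of projective lines in `ℝP^{m-1}` with pairwise distinct
intersection points, as a subspace of `Gr(2,ℝ^m)³`. -/
def Triples (m : ℕ) : Type :=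
  { p : Gr 2 m × Gr 2 m × Gr 2 m // GoodTriple p }

instance (m : ℕ) : TopologicalSpace (Triples m) :=
  inferInstanceAs (TopologicalSpace { p : Gr 2 m × Gr 2 m × Gr 2 m // GoodTriple p })

/-- The (partial) flag variety of flags of signature `(0,1,2,3,m)` in `ℝ^m`;
for `m = 4` this is the complete flag variety `Flag(ℝ⁴)`. -/
def Flag123 (m : ℕ) : Type :=
  { v : Gr 1 m × Gr 2 m × Gr 3 m // v.1.1 ≤ v.2.1.1 ∧ v.2.1.1 ≤ v.2.2.1 }

instance (m : ℕ) : TopologicalSpace (Flag123 m) :=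
  inferInstanceAs (TopologicalSpace
    { v : Gr 1 m × Gr 2 m × Gr 3 m // v.1.1 ≤ v.2.1.1 ∧ v.2.1.1 ≤ v.2.2.1 })

/-- The complete flag variety `Flag(ℝ³)`. -/
def FlagR3 : Type := { v : Gr 1 3 × Gr 2 3 // v.1.1 ≤ v.2.1 }

instance : TopologicalSpace FlagR3 :=
  inferInstanceAs (TopologicalSpace { v : Gr 1 3 × Gr 2 3 // v.1.1 ≤ v.2.1 })

/-- The kernel of the linear functional `rᵢ(A) : ℝ^m → ℝ`, `x ↦ ∑ⱼ A i j * x j`,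
given by the `i`-th row of `A`. -/
def rowKer {m : ℕ} (A : Matrix (Fin m) (Fin m) ℝ) (i : Fin m) : Submodule ℝ (Euc m) :=
  LinearMap.ker ((∑ j : Fin m, A i j • (EuclideanSpace.proj j : Euc m →L[ℝ] ℝ) : Euc m →L[ℝ] ℝ) : Euc m →ₗ[ℝ] ℝ)

/-- The span of the first `k` columns of a matrix `A`, as a subspace of `ℝ^m`. -/
def colSpan {m : ℕ} (A : Matrix (Fin m) (Fin m) ℝ) (k : ℕ) : Submodule ℝ (Euc m) :=
  Submodule.span ℝ
    ((fun j : Fin m => (EuclideanSpace.equiv (Fin m) ℝ).symm (fun i => A i j)) ''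
      { j : Fin m | (j : ℕ) < k })

/-- The product of diagonal matrices is diagonal. -/
theorem isDiag_mul' {n : ℕ} {A B : Matrix (Fin n) (Fin n) ℝ}
    (hA : A.IsDiag) (hB : B.IsDiag) : (A * B).IsDiag := by
  intro i j hij
  rw [Matrix.mul_apply]
  refine Finset.sum_eq_zero fun k _ => ?_
  rcases eq_or_ne i k with rfl | hk
  · rw [hB hij, mul_zero]
  · rw [hA hk, zero_mul]

/-- The subgroup `T` of `GL(n,ℝ)` consisting of invertible diagonal matrices. -/
def diagGL (n : ℕ) : Subgroup (Matrix.GeneralLinearGroup (Fin n) ℝ) where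
  carrier := { A | (A : Matrix (Fin n) (Fin n) ℝ).IsDiag }
  one_mem' := Matrix.isDiag_one
  mul_mem' := fun ha hb => isDiag_mul' ha hb
  inv_mem' := by
    intro A hA
    show ((A⁻¹ : Matrix.GeneralLinearGroup (Fin n) ℝ) : Matrix (Fin n) (Fin n) ℝ).IsDiag
    rw [Matrix.coe_units_inv, ← Matrix.IsDiag.diagonal_diag hA, Matrix.inv_diagonal]
    exact Matrix.isDiag_diagonal _

/-- The orthogonal group `O(n)` of `n × n` real orthogonal matrices. -/
abbrev Orth (n : ℕ) := Matrix.orthogonalGroup (Fin n) ℝ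

/-- The subgroup `T ∩ O(n)` of diagonal orthogonal matrices (diagonal entries `±1`). -/
def diagOrth (n : ℕ) : Subgroup ↥(Orth n) where
  carrier := { A | (A : Matrix (Fin n) (Fin n) ℝ).IsDiag }
  one_mem' := Matrix.isDiag_one
  mul_mem' := fun ha hb => isDiag_mul' ha hb
  inv_mem' := by
    intro A hA
    show ((A⁻¹ : ↥(Orth n)) : Matrix (Fin n) (Fin n) ℝ).IsDiag
    rw [Matrix.UnitaryGroup.inv_val, Matrix.star_eq_conjTranspose]
    exact hA.conjTranspose

/-- `SO(n)`, as the subgroup of `O(n)` of matrices of determinant `1`. -/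
def SOsub (n : ℕ) : Subgroup ↥(Orth n) where
  carrier := { A | (A : Matrix (Fin n) (Fin n) ℝ).det = 1 }
  one_mem' := by simp
  mul_mem' := by
    intro a b ha hb
    show ((a * b : ↥(Orth n)) : Matrix (Fin n) (Fin n) ℝ).det = 1
    rw [Matrix.UnitaryGroup.mul_val, Matrix.det_mul, ha, hb, mul_one]
  inv_mem' := by
    intro A hA
    show ((A⁻¹ : ↥(Orth n)) : Matrix (Fin n) (Fin n) ℝ).det = 1
    rw [Matrix.UnitaryGroup.inv_val, Matrix.star_eq_conjTranspose, Matrix.det_conjTranspose]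
    simpa using congrArg star hA

/-- The group `SO(n)` of `n × n` real orthogonal matrices of determinant `1`. -/
abbrev SO (n : ℕ) := ↥(SOsub n)

/-- The underlying matrix of an element of `SO(n)`. -/
def soMat {n : ℕ} (A : SO n) : Matrix (Fin n) (Fin n) ℝ :=
  ((A : ↥(Orth n)) : Matrix (Fin n) (Fin n) ℝ)

/-- The subgroup `Kₙ` of `SO(n)` of diagonal matrices
(entries `±1`, determinant `1`). -/
def Kdiag (n : ℕ) : Subgroup (SO n) where
  carrier := { A | (soMat A).IsDiag }
  one_mem' := Matrix.isDiag_one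
  mul_mem' := fun ha hb => isDiag_mul' ha hb
  inv_mem' := by
    intro A hA
    show (soMat A⁻¹).IsDiag
    have h : soMat A⁻¹ = star (soMat A) := rfl
    rw [h, Matrix.star_eq_conjTranspose]
    exact hA.conjTranspose

/-- The Borel subgroup `Bₙ` of `GL(n,ℝ)` of invertible upper-triangular matrices. -/
def upperB (n : ℕ) : Subgroup (Matrix.GeneralLinearGroup (Fin n) ℝ) where
  carrier := { A | (A : Matrix (Fin n) (Fin n) ℝ).BlockTriangular id }
  one_mem' := Matrix.blockTriangular_one
  mul_mem' := fun ha hb => ha.mul hb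
  inv_mem' := by
    intro A hA
    show ((A⁻¹ : Matrix.GeneralLinearGroup (Fin n) ℝ) :
      Matrix (Fin n) (Fin n) ℝ).BlockTriangular id
    rw [Matrix.coe_units_inv]
    haveI := A.invertible
    exact Matrix.blockTriangular_inv_of_blockTriangular hA

/-- The singular chain complex of a topological space: the free simplicial abelian group
on the singular simplicial set, made into a chain complex via alternating face maps. -/
def singularChainComplex (X : Type) [TopologicalSpace X] : ChainComplex AddCommGrpCat ℕ :=
  (AlgebraicTopology.alternatingFaceMapComplex AddCommGrpCat).obj
    (((CategoryTheory.SimplicialObject.whiskering _ _).obj AddCommGrpCat.free).obj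
      (TopCat.toSSet.obj (TopCat.of X)))

/-- The `k`-th integral singular homology group of a topological space. -/
def singularHomology (X : Type) [TopologicalSpace X] (k : ℕ) : AddCommGrpCat :=
  (singularChainComplex X).homology k



/-!
Taking orthogonal complements identifies a triple of planes in `ℝ³` with pairwise distinct
intersection points with a triple of lines `(ℓ₁, ℓ₂, ℓ₃)` spanning `ℝ³`. Such a triple
determines the flag `ℓ₁ ⊂ ℓ₁ ⊕ ℓ₂`, and the flag `V₁ ⊂ V₂` is recovered from the spanning triple
`(V₁, V₁ᗮ ⊓ V₂, V₂ᗮ)`. The other composite is homotopic to the identity through Gram–Schmidt: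
`ℓ₂ ↦ (1 - t P_{ℓ₁}) ℓ₂` and `ℓ₃ ↦ (1 - t P_{ℓ₁ ⊕ ℓ₂}) ℓ₃`. The triple keeps spanning because
`1 - t P_U` only changes vectors by elements of `U`, which is already spanned.
-/
open scoped ContinuousMap Topology

namespace Submodule

variable {𝕜 E : Type*} [RCLike 𝕜] [NormedAddCommGroup E] [InnerProductSpace 𝕜 E]

theorem starProjection_sup_of_le_orthogonal {U W : Submodule 𝕜 E} [U.HasOrthogonalProjection]
    [W.HasOrthogonalProjection] [(U ⊔ W).HasOrthogonalProjection] (h : W ≤ Uᗮ) :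
    (U ⊔ W).starProjection = U.starProjection + W.starProjection := by
  have hU : U ≤ Wᗮ := isOrtho_iff_le.1 (isOrtho_iff_le.2 h).symm
  ext x
  refine eq_starProjection_of_mem_orthogonal
    (add_mem_sup (U.starProjection_apply_mem x) (W.starProjection_apply_mem x)) ?_
  rw [← inf_orthogonal]
  constructor
  · simpa [sub_add_eq_sub_sub] using
      Uᗮ.sub_mem (U.sub_starProjection_mem_orthogonal x) (h (W.starProjection_apply_mem x))
  · simpa [sub_add_eq_sub_sub_swap] using
      Wᗮ.sub_mem (W.sub_starProjection_mem_orthogonal x) (hU (U.starProjection_apply_mem x))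

theorem sup_sup_orthogonal_eq_top_iff [FiniteDimensional 𝕜 E] (U V W : Submodule 𝕜 E) :
    Uᗮ ⊔ Vᗮ ⊔ Wᗮ = ⊤ ↔ U ⊓ V ⊓ W = ⊥ := by
  rw [← orthogonal_eq_bot_iff, ← inf_orthogonal, ← inf_orthogonal, orthogonal_orthogonal,
    orthogonal_orthogonal, orthogonal_orthogonal]

variable (U : Submodule 𝕜 E) [U.HasOrthogonalProjection]

theorem ker_one_sub_smul_starProjection_le (t : 𝕜) :
    LinearMap.ker ((1 - t • U.starProjection : E →L[𝕜] E) : E →ₗ[𝕜] E) ≤ U := by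
  intro x hx
  have hx' : x = t • U.starProjection x := by
    simpa [sub_eq_zero] using (LinearMap.mem_ker.1 hx : (1 - t • U.starProjection) x = 0)
  rw [hx']
  exact U.smul_mem t (U.starProjection_apply_mem x)

theorem sup_map_one_sub_smul_starProjection (W : Submodule 𝕜 E) (t : 𝕜) :
    U ⊔ W.map ((1 - t • U.starProjection : E →L[𝕜] E) : E →ₗ[𝕜] E) = U ⊔ W := by
  have hU : ∀ x, t • U.starProjection x ∈ U := fun x => U.smul_mem t (U.starProjection_apply_mem x)
  apply le_antisymm
  · refine sup_le le_sup_left (map_le_iff_le_comap.2 fun x hx => ?_)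
    simpa using sub_mem (mem_sup_right hx) (mem_sup_left (hU x))
  · refine sup_le le_sup_left fun x hx => ?_
    have hx' : x = (1 - t • U.starProjection : E →L[𝕜] E) x + t • U.starProjection x := by simp
    rw [hx']
    exact add_mem (mem_sup_right (mem_map_of_mem hx)) (mem_sup_left (hU x))

theorem map_one_sub_starProjection_le (W : Submodule 𝕜 E) :
    W.map ((1 - U.starProjection : E →L[𝕜] E) : E →ₗ[𝕜] E) ≤ Uᗮ := by
  rw [← starProjection_orthogonal' U]
  exact map_le_iff_le_comap.2 fun x _ => Uᗮ.starProjection_apply_mem x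

end Submodule

section SpanSingleton

variable {E : Type*} [NormedAddCommGroup E] [InnerProductSpace ℝ E]

theorem Submodule.starProjection_span_singleton_eq (w : E) :
    (ℝ ∙ w).starProjection = (‖w‖ ^ 2)⁻¹ • (innerSL ℝ w).smulRight w := by
  ext x
  simp [starProjection_singleton, div_eq_inv_mul, mul_smul]

theorem continuousAt_starProjection_span_singleton {w : E} (hw : w ≠ 0) :
    ContinuousAt (fun v : E => (ℝ ∙ v).starProjection) w := by
  simp_rw [Submodule.starProjection_span_singleton_eq]
  refine ContinuousAt.smul (f := fun v : E => (‖v‖ ^ 2)⁻¹) ?_ ?_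
  · exact ((continuous_norm.pow 2).continuousAt).inv₀ (pow_ne_zero 2 (norm_ne_zero_iff.2 hw))
  · exact ((ContinuousLinearMap.smulRightL ℝ E E).continuous₂.comp
      ((innerSL ℝ).continuous.prodMk continuous_id)).continuousAt

end SpanSingleton

namespace Gr

variable {k l m : ℕ}

/-- By definition, these projections induce the topology of `Gr k m`. -/
def proj (V : Gr k m) : Euc m →L[ℝ] Euc m := V.1.starProjection

theorem isInducing_proj : Topology.IsInducing (proj : Gr k m → Euc m →L[ℝ] Euc m) := ⟨rfl⟩

theorem continuous_proj : Continuous (proj : Gr k m → Euc m →L[ℝ] Euc m) :=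
  isInducing_proj.continuous

theorem proj_eq_starProjection {V : Gr k m} {W : Submodule ℝ (Euc m)} (h : V.1 = W) :
    V.proj = W.starProjection := by
  obtain ⟨V, _⟩ := V
  subst h
  rfl

theorem eq_of_le {V W : Gr k m} (h : V.1 ≤ W.1) : V = W :=
  Subtype.ext (Submodule.eq_of_le_of_finrank_eq h (V.2.trans W.2.symm))

def orthogonal (h : k + l = m) (V : Gr k m) : Gr l m :=
  ⟨V.1ᗮ, by
    have := V.1.finrank_add_finrank_orthogonal
    rw [V.2, finrank_euclideanSpace_fin] at this
    omega⟩

theorem proj_orthogonal (h : k + l = m) (V : Gr k m) : (V.orthogonal h).proj = 1 - V.proj :=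
  V.1.starProjection_orthogonal'

theorem continuous_orthogonal (h : k + l = m) : Continuous (orthogonal h : Gr k m → Gr l m) := by
  rw [isInducing_proj.continuous_iff]
  simp only [Function.comp_def, proj_orthogonal]
  exact continuous_const.sub continuous_proj

theorem orthogonal_orthogonal (h : k + l = m) (h' : l + k = m) (V : Gr k m) :
    (V.orthogonal h).orthogonal h' = V :=
  Subtype.ext V.1.orthogonal_orthogonal

def orthogonalHomeomorph (h : k + l = m) : Gr k m ≃ₜ Gr l m where
  toFun := orthogonal h
  invFun := orthogonal (by omega)
  left_inv := orthogonal_orthogonal _ _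
  right_inv := orthogonal_orthogonal _ _
  continuous_toFun := continuous_orthogonal h
  continuous_invFun := continuous_orthogonal _

theorem coe_eq_span_singleton {u : Gr 1 m} {v : Euc m} (hvu : v ∈ u.1) (hv : v ≠ 0) :
    u.1 = ℝ ∙ v :=
  (Submodule.eq_of_le_of_finrank_eq ((Submodule.span_singleton_le_iff_mem v u.1).2 hvu)
    (by rw [finrank_span_singleton hv, u.2])).symm

theorem exists_coe_eq_span_singleton (u : Gr 1 m) : ∃ v : Euc m, v ≠ 0 ∧ u.1 = ℝ ∙ v := by
  have hu : u.1 ≠ ⊥ := fun h => one_ne_zero (u.2.symm.trans (by rw [h, finrank_bot]))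
  obtain ⟨v, hvu, hv⟩ := Submodule.exists_mem_ne_zero_of_ne_bot hu
  exact ⟨v, hv, coe_eq_span_singleton hvu hv⟩

theorem disjoint_of_not_le {u : Gr 1 m} {U : Submodule ℝ (Euc m)} (h : ¬ u.1 ≤ U) :
    Disjoint u.1 U := by
  obtain ⟨v, hv, hu⟩ := u.exists_coe_eq_span_singleton
  rw [hu, Submodule.span_singleton_le_iff_mem] at h
  rw [hu, disjoint_comm, Submodule.disjoint_span_singleton' hv]
  exact h

/-- The image of a line under `F`, with the junk value `u` when `F` kills `u`. -/
def mapLine (F : Euc m →L[ℝ] Euc m) (u : Gr 1 m) : Gr 1 m :=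
  if h : finrank ℝ (u.1.map (F : Euc m →ₗ[ℝ] Euc m)) = 1 then ⟨_, h⟩ else u

theorem coe_mapLine {F : Euc m →L[ℝ] Euc m} {u : Gr 1 m} {v : Euc m} (hu : u.1 = ℝ ∙ v)
    (hv : F v ≠ 0) : (mapLine F u).1 = ℝ ∙ F v := by
  have hmap : u.1.map (F : Euc m →ₗ[ℝ] Euc m) = ℝ ∙ F v := by
    rw [hu, Submodule.map_span, Set.image_singleton]
    rfl
  have hrank : finrank ℝ (u.1.map (F : Euc m →ₗ[ℝ] Euc m)) = 1 := by
    rw [hmap, finrank_span_singleton hv]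
  have hdef : mapLine F u = ⟨_, hrank⟩ := dif_pos hrank
  rw [hdef, ← hmap]

theorem coe_mapLine_of_disjoint {F : Euc m →L[ℝ] Euc m} {u : Gr 1 m}
    (h : Disjoint u.1 (LinearMap.ker (F : Euc m →ₗ[ℝ] Euc m))) :
    (mapLine F u).1 = u.1.map (F : Euc m →ₗ[ℝ] Euc m) := by
  obtain ⟨v, hv, hu⟩ := u.exists_coe_eq_span_singleton
  have hFv : F v ≠ 0 := fun h0 =>
    hv (Submodule.disjoint_def.1 h v (hu ▸ Submodule.mem_span_singleton_self v) h0)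
  rw [coe_mapLine hu hFv, hu, Submodule.map_span, Set.image_singleton]
  rfl

theorem mapLine_one (u : Gr 1 m) : mapLine 1 u = u := by
  obtain ⟨v, hv, hu⟩ := u.exists_coe_eq_span_singleton
  exact Subtype.ext ((coe_mapLine hu hv).trans hu.symm)

theorem mapLine_one_sub_zero_smul (P : Euc m →L[ℝ] Euc m) (u : Gr 1 m) :
    mapLine (1 - (0 : ℝ) • P) u = u := by
  -- `simp` does not rewrite `0 • P` in this space of operators, but it does pointwise
  have hP : 1 - (0 : ℝ) • P = 1 := ContinuousLinearMap.ext fun x => by simp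
  rw [hP, mapLine_one]

theorem continuousAt_mapLine {X : Type*} [TopologicalSpace X] {F : X → Euc m →L[ℝ] Euc m}
    {c : X → Gr 1 m} {x₀ : X} (hF : ContinuousAt F x₀) (hc : ContinuousAt c x₀)
    (h : Disjoint (c x₀).1 (LinearMap.ker (F x₀ : Euc m →ₗ[ℝ] Euc m))) :
    ContinuousAt (fun x => mapLine (F x) (c x)) x₀ := by
  obtain ⟨v, hv, hcv⟩ := (c x₀).exists_coe_eq_span_singleton
  -- `s x` spans the line `c x` near `x₀`, so `F x (s x)` spans its image
  set s : X → Euc m := fun x => (c x).proj v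
  have hs : ContinuousAt s x₀ := (continuous_proj.continuousAt.comp hc).clm_apply continuousAt_const
  have hv_mem : v ∈ (c x₀).1 := hcv ▸ Submodule.mem_span_singleton_self v
  have hs₀ : s x₀ = v := Submodule.starProjection_eq_self_iff.2 hv_mem
  have hFs : ContinuousAt (fun x => F x (s x)) x₀ := hF.clm_apply hs
  have hFs₀ : F x₀ (s x₀) ≠ 0 := by
    rw [hs₀]
    exact fun h0 => hv (Submodule.disjoint_def.1 h v hv_mem h0)
  have hproj : ∀ᶠ x in 𝓝 x₀, (ℝ ∙ F x (s x)).starProjection = (mapLine (F x) (c x)).proj := by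
    filter_upwards [hs.eventually_ne (hs₀ ▸ hv), hFs.eventually_ne hFs₀] with x hsx hFx
    exact (proj_eq_starProjection (coe_mapLine
      (coe_eq_span_singleton ((c x).1.starProjection_apply_mem v) hsx) hFx)).symm
  rw [isInducing_proj.continuousAt_iff]
  exact ((continuousAt_starProjection_span_singleton hFs₀).comp (f := fun x => F x (s x)) hFs).congr
    hproj

theorem continuous_mapLine {X : Type*} [TopologicalSpace X] {F : X → Euc m →L[ℝ] Euc m}
    {c : X → Gr 1 m} (hF : Continuous F) (hc : Continuous c)
    (h : ∀ x, Disjoint (c x).1 (LinearMap.ker (F x : Euc m →ₗ[ℝ] Euc m))) :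
    Continuous fun x => mapLine (F x) (c x) :=
  continuous_iff_continuousAt.2 fun x =>
    continuousAt_mapLine hF.continuousAt hc.continuousAt (h x)

end Gr

theorem Submodule.eq_iff_inf_ne_bot_of_finrank_eq_one {K V : Type*} [DivisionRing K]
    [AddCommGroup V] [Module K V] {L M : Submodule K V} [FiniteDimensional K L]
    [FiniteDimensional K M] (hL : finrank K L = 1) (hM : finrank K M = 1) :
    L = M ↔ L ⊓ M ≠ ⊥ := by
  refine ⟨fun h hbot => ?_, fun h => ?_⟩
  · rw [h, inf_idem, ← finrank_eq_zero] at hbot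
    omega
  · have hpos : 0 < finrank K ↥(L ⊓ M) :=
      Nat.pos_of_ne_zero fun h0 => h (Submodule.finrank_eq_zero.1 h0)
    exact (Submodule.eq_of_le_of_finrank_le inf_le_left (by omega)).symm.trans
      (Submodule.eq_of_le_of_finrank_le inf_le_right (by omega))

theorem finrank_inf_eq_one_of_inf_inf_eq_bot {a b c : Gr 2 3} (h : a.1 ⊓ b.1 ⊓ c.1 = ⊥) :
    finrank ℝ ↥(a.1 ⊓ b.1) = 1 := by
  have hab := Submodule.finrank_sup_add_finrank_inf_eq a.1 b.1
  have habc := Submodule.finrank_sup_add_finrank_inf_eq (a.1 ⊓ b.1) c.1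
  have h₁ := (a.1 ⊔ b.1).finrank_le
  have h₂ := (a.1 ⊓ b.1 ⊔ c.1).finrank_le
  rw [h, finrank_bot, a.2, b.2, c.2] at *
  rw [finrank_euclideanSpace_fin] at h₁ h₂
  omega

theorem goodTriple_iff_inf_inf_eq_bot (a b c : Gr 2 3) :
    GoodTriple (a, b, c) ↔ a.1 ⊓ b.1 ⊓ c.1 = ⊥ := by
  have hab_ac : a.1 ⊓ b.1 ⊓ (a.1 ⊓ c.1) = a.1 ⊓ b.1 ⊓ c.1 := by
    rw [inf_inf_inf_comm, inf_idem, inf_assoc]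
  have hab_bc : a.1 ⊓ b.1 ⊓ (b.1 ⊓ c.1) = a.1 ⊓ b.1 ⊓ c.1 := by
    rw [inf_assoc, ← inf_assoc b.1, inf_idem, inf_assoc]
  have hac_bc : a.1 ⊓ c.1 ⊓ (b.1 ⊓ c.1) = a.1 ⊓ b.1 ⊓ c.1 := by
    rw [inf_inf_inf_comm, inf_idem, inf_assoc]
  simp only [GoodTriple]
  constructor
  · rintro ⟨hab, hac, -, hne, -, -⟩
    rw [Ne, Submodule.eq_iff_inf_ne_bot_of_finrank_eq_one hab hac, hab_ac, not_not] at hne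
    exact hne
  · intro h
    have hab : finrank ℝ ↥(a.1 ⊓ b.1) = 1 := finrank_inf_eq_one_of_inf_inf_eq_bot h
    have hac : finrank ℝ ↥(a.1 ⊓ c.1) = 1 :=
      finrank_inf_eq_one_of_inf_inf_eq_bot (c := b) (by rwa [inf_right_comm])
    have hbc : finrank ℝ ↥(b.1 ⊓ c.1) = 1 :=
      finrank_inf_eq_one_of_inf_inf_eq_bot (c := a) (by rwa [inf_comm, ← inf_assoc])
    simp only [Ne, Submodule.eq_iff_inf_ne_bot_of_finrank_eq_one hab hac,
      Submodule.eq_iff_inf_ne_bot_of_finrank_eq_one hab hbc,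
      Submodule.eq_iff_inf_ne_bot_of_finrank_eq_one hac hbc, hab_ac, hab_bc, hac_bc, h]
    simp [hab, hac, hbc]

def SpanningLines : Type :=
  { p : Gr 1 3 × Gr 1 3 × Gr 1 3 // p.1.1 ⊔ p.2.1.1 ⊔ p.2.2.1 = ⊤ }

instance : TopologicalSpace SpanningLines :=
  inferInstanceAs
    (TopologicalSpace { p : Gr 1 3 × Gr 1 3 × Gr 1 3 // p.1.1 ⊔ p.2.1.1 ⊔ p.2.2.1 = ⊤ })

def Triples.homeomorphSpanningLines : Triples 3 ≃ₜ SpanningLines :=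
  let e := Gr.orthogonalHomeomorph (k := 2) (l := 1) (m := 3) rfl
  (e.prodCongr (e.prodCongr e)).subtype fun ⟨a, b, c⟩ => by
    rw [goodTriple_iff_inf_inf_eq_bot]
    exact (Submodule.sup_sup_orthogonal_eq_top_iff a.1 b.1 c.1).symm

namespace SpanningLines

variable (w : SpanningLines)

abbrev line₁ : Gr 1 3 := w.1.1
abbrev line₂ : Gr 1 3 := w.1.2.1
abbrev line₃ : Gr 1 3 := w.1.2.2

theorem continuous_line₁ : Continuous line₁ := continuous_fst.comp continuous_subtype_val
theorem continuous_line₂ : Continuous line₂ :=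
  continuous_fst.comp (continuous_snd.comp continuous_subtype_val)
theorem continuous_line₃ : Continuous line₃ :=
  continuous_snd.comp (continuous_snd.comp continuous_subtype_val)

theorem sup_sup_eq_top : w.line₁.1 ⊔ w.line₂.1 ⊔ w.line₃.1 = ⊤ := w.2

theorem finrank_sup : finrank ℝ ↥(w.line₁.1 ⊔ w.line₂.1) = 2 := by
  have h₁ := Submodule.finrank_add_le_finrank_add_finrank w.line₁.1 w.line₂.1
  have h₂ := Submodule.finrank_add_le_finrank_add_finrank (w.line₁.1 ⊔ w.line₂.1) w.line₃.1
  rw [sup_sup_eq_top, finrank_top, finrank_euclideanSpace_fin, w.line₁.2, w.line₂.2, w.line₃.2] at *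
  omega

def plane : Gr 2 3 := ⟨w.line₁.1 ⊔ w.line₂.1, w.finrank_sup⟩

theorem not_line₂_le : ¬ w.line₂.1 ≤ w.line₁.1 := fun h => by
  have := w.finrank_sup
  rw [sup_eq_left.2 h, w.line₁.2] at this
  omega

theorem not_line₃_le : ¬ w.line₃.1 ≤ w.plane.1 := fun h => by
  have h' : w.line₃.1 ≤ w.line₁.1 ⊔ w.line₂.1 := h
  have htop := w.sup_sup_eq_top
  have hrank := w.finrank_sup
  rw [sup_eq_left.2 h'] at htop
  rw [htop, finrank_top, finrank_euclideanSpace_fin] at hrank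
  omega

def line₂At (t : ℝ) : Gr 1 3 := Gr.mapLine (1 - t • w.line₁.proj) w.line₂

def line₃At (t : ℝ) : Gr 1 3 := Gr.mapLine (1 - t • w.plane.proj) w.line₃

theorem coe_line₂At (t : ℝ) :
    (w.line₂At t).1 =
      w.line₂.1.map ((1 - t • w.line₁.proj : Euc 3 →L[ℝ] Euc 3) : Euc 3 →ₗ[ℝ] Euc 3) :=
  Gr.coe_mapLine_of_disjoint ((Gr.disjoint_of_not_le w.not_line₂_le).mono_right
    (w.line₁.1.ker_one_sub_smul_starProjection_le t))

theorem coe_line₃At (t : ℝ) :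
    (w.line₃At t).1 =
      w.line₃.1.map ((1 - t • w.plane.proj : Euc 3 →L[ℝ] Euc 3) : Euc 3 →ₗ[ℝ] Euc 3) :=
  Gr.coe_mapLine_of_disjoint ((Gr.disjoint_of_not_le w.not_line₃_le).mono_right
    (w.plane.1.ker_one_sub_smul_starProjection_le t))

theorem line₁_sup_line₂At (t : ℝ) : w.line₁.1 ⊔ (w.line₂At t).1 = w.plane.1 := by
  rw [coe_line₂At]
  exact w.line₁.1.sup_map_one_sub_smul_starProjection _ t

theorem sup_sup_line₃At_eq_top (t : ℝ) :
    w.line₁.1 ⊔ (w.line₂At t).1 ⊔ (w.line₃At t).1 = ⊤ := by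
  rw [line₁_sup_line₂At, coe_line₃At]
  exact (w.plane.1.sup_map_one_sub_smul_starProjection _ t).trans w.2

theorem line₂At_one_le : (w.line₂At 1).1 ≤ w.line₁.1ᗮ := by
  rw [coe_line₂At, one_smul]
  exact w.line₁.1.map_one_sub_starProjection_le _

theorem line₃At_one_le : (w.line₃At 1).1 ≤ w.plane.1ᗮ := by
  rw [coe_line₃At, one_smul]
  exact w.plane.1.map_one_sub_starProjection_le _

theorem proj_plane : w.plane.proj = w.line₁.proj + (w.line₂At 1).proj := by
  rw [Gr.proj_eq_starProjection (w.line₁_sup_line₂At 1).symm]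
  exact Submodule.starProjection_sup_of_le_orthogonal w.line₂At_one_le

section Continuity

variable {X : Type*} [TopologicalSpace X] {τ : X → ℝ} {σ : X → SpanningLines}

theorem continuous_line₂At (hτ : Continuous τ) (hσ : Continuous σ) :
    Continuous fun x => (σ x).line₂At (τ x) :=
  Gr.continuous_mapLine
    (continuous_const.sub (hτ.smul (Gr.continuous_proj.comp (continuous_line₁.comp hσ))))
    (continuous_line₂.comp hσ) fun x =>
      (Gr.disjoint_of_not_le (σ x).not_line₂_le).mono_right
        ((σ x).line₁.1.ker_one_sub_smul_starProjection_le (τ x))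

theorem continuous_plane : Continuous plane := by
  rw [Gr.isInducing_proj.continuous_iff]
  simp only [Function.comp_def, proj_plane]
  exact (Gr.continuous_proj.comp continuous_line₁).add
    (Gr.continuous_proj.comp (continuous_line₂At continuous_const continuous_id))

theorem continuous_line₃At (hτ : Continuous τ) (hσ : Continuous σ) :
    Continuous fun x => (σ x).line₃At (τ x) :=
  Gr.continuous_mapLine
    (continuous_const.sub (hτ.smul (Gr.continuous_proj.comp (continuous_plane.comp hσ))))
    (continuous_line₃.comp hσ) fun x =>
      (Gr.disjoint_of_not_le (σ x).not_line₃_le).mono_right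
        ((σ x).plane.1.ker_one_sub_smul_starProjection_le (τ x))

end Continuity

end SpanningLines

namespace FlagR3

variable (v : FlagR3)

theorem finrank_orthogonal_inf : finrank ℝ ↥(v.1.1.1ᗮ ⊓ v.1.2.1) = 1 := by
  have := Submodule.finrank_add_inf_finrank_orthogonal v.2
  rw [v.1.1.2, v.1.2.2] at this
  omega

def orthogonalLine : Gr 1 3 := ⟨v.1.1.1ᗮ ⊓ v.1.2.1, v.finrank_orthogonal_inf⟩

theorem sup_orthogonalLine : v.1.1.1 ⊔ v.orthogonalLine.1 = v.1.2.1 :=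
  Submodule.sup_orthogonal_inf_of_hasOrthogonalProjection v.2

theorem proj_orthogonalLine : v.orthogonalLine.proj = v.1.2.proj - v.1.1.proj := by
  rw [eq_sub_iff_add_eq', Gr.proj_eq_starProjection v.sup_orthogonalLine.symm]
  exact (Submodule.starProjection_sup_of_le_orthogonal inf_le_left).symm

theorem continuous_orthogonalLine : Continuous orthogonalLine := by
  rw [Gr.isInducing_proj.continuous_iff]
  simp only [Function.comp_def, proj_orthogonalLine]
  exact (Gr.continuous_proj.comp (continuous_snd.comp continuous_subtype_val)).sub
    (Gr.continuous_proj.comp (continuous_fst.comp continuous_subtype_val))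

theorem sup_sup_eq_top : v.1.1.1 ⊔ v.orthogonalLine.1 ⊔ v.1.2.1ᗮ = ⊤ := by
  rw [sup_orthogonalLine]
  exact Submodule.sup_orthogonal_of_hasOrthogonalProjection

def toSpanningLines : C(FlagR3, SpanningLines) where
  toFun v := ⟨(v.1.1, v.orthogonalLine, v.1.2.orthogonal rfl), v.sup_sup_eq_top⟩
  continuous_toFun := continuous_induced_rng.2 <|
    (continuous_fst.comp continuous_subtype_val).prodMk
    (continuous_orthogonalLine.prodMk
      ((Gr.continuous_orthogonal rfl).comp (continuous_snd.comp continuous_subtype_val)))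

end FlagR3

namespace SpanningLines

def toFlag : C(SpanningLines, FlagR3) where
  toFun w := ⟨(w.line₁, w.plane), le_sup_left⟩
  continuous_toFun := (continuous_line₁.prodMk continuous_plane).subtype_mk _

theorem toFlag_comp_toSpanningLines : toFlag.comp FlagR3.toSpanningLines = ContinuousMap.id _ := by
  ext v : 1
  apply Subtype.ext
  refine Prod.ext rfl (Subtype.ext ?_)
  exact v.sup_orthogonalLine

def homotopy : (ContinuousMap.id SpanningLines).Homotopy (FlagR3.toSpanningLines.comp toFlag) where
  toFun p := ⟨(p.2.line₁, p.2.line₂At p.1, p.2.line₃At p.1), p.2.sup_sup_line₃At_eq_top p.1⟩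
  continuous_toFun :=
    have ht : Continuous fun p : unitInterval × SpanningLines => (p.1 : ℝ) :=
      continuous_subtype_val.comp continuous_fst
    ((continuous_line₁.comp continuous_snd).prodMk ((continuous_line₂At ht continuous_snd).prodMk
      (continuous_line₃At ht continuous_snd))).subtype_mk _
  map_zero_left w := by
    change (⟨(w.line₁, w.line₂At 0, w.line₃At 0), _⟩ : SpanningLines) = w
    simp only [line₂At, line₃At, Gr.mapLine_one_sub_zero_smul]
    rfl
  map_one_left w := by
    apply Subtype.ext
    refine Prod.ext rfl (Prod.ext (Gr.eq_of_le ?_) (Gr.eq_of_le ?_))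
    · exact le_inf w.line₂At_one_le (le_sup_right.trans (w.line₁_sup_line₂At 1).le)
    · exact w.line₃At_one_le

def homotopyEquivFlag : SpanningLines ≃ₕ FlagR3 where
  toFun := toFlag
  invFun := FlagR3.toSpanningLines
  left_inv := ⟨homotopy.symm⟩
  right_inv := toFlag_comp_toSpanningLines ▸ ContinuousMap.Homotopic.refl _

end SpanningLines

theorem stmt16 : Nonempty (ContinuousMap.HomotopyEquiv (Triples 3) FlagR3) :=
  ⟨Triples.homeomorphSpanningLines.toHomotopyEquiv.trans SpanningLines.homotopyEquivFlag⟩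

end
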